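/- Let C be a cyclic code over R = F_p[u,v]/⟨u^k, v², uv−vu⟩ of length p^l with torsion polynomial g_{2k}(x) = (x−1)^{t_{2k}} where 0 < t_{2k}. If t_{2k} ≤ p^{l−1}, then the minimum Hamming distance of C is 2. -/

import Mathlib

set_option synthInstance.maxHeartbeats 1000000

open Polynomial

/-- The ring `F_p[u,v]/⟨u^k, v²⟩` (the variables commute, so `uv - vu = 0` is automatic). -/
abbrev Rbase (p k : ℕ) : Type :=
  MvPolynomial (Fin 2) (ZMod p) ⧸
    Ideal.span {(MvPolynomial.X 0 : MvPolynomial (Fin 2) (ZMod p)) ^ k, MvPolynomial.X 1 ^ 2}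

/-- The image of `u`. -/
noncomputable def uu (p k : ℕ) : Rbase p k := Ideal.Quotient.mk _ (MvPolynomial.X 0)

/-- The image of `v`. -/
noncomputable def vv (p k : ℕ) : Rbase p k := Ideal.Quotient.mk _ (MvPolynomial.X 1)

/-- `R_n = (F_p[u,v]/⟨u^k,v²⟩)[x]/⟨xⁿ−1⟩`, the ambient ring of cyclic codes of length `n`. -/
abbrev Rn (p k n : ℕ) : Type :=
  Polynomial (Rbase p k) ⧸
    Ideal.span {(Polynomial.X : Polynomial (Rbase p k)) ^ n - 1}

instance (p k n : ℕ) : (Ideal.span {(Polynomial.X : Polynomial (Rbase p k)) ^ n - 1}).IsTwoSided :=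
  ⟨fun b ha ↦ mul_comm b _ ▸ Ideal.mul_mem_left _ b ha⟩

noncomputable def uR (p k n : ℕ) : Rn p k n := Ideal.Quotient.mk _ (Polynomial.C (uu p k))
noncomputable def vR (p k n : ℕ) : Rn p k n := Ideal.Quotient.mk _ (Polynomial.C (vv p k))
noncomputable def xR (p k n : ℕ) : Rn p k n := Ideal.Quotient.mk _ Polynomial.X

/-- The canonical map `F_p[x] → R_n` (coefficientwise inclusion followed by the quotient map). -/
noncomputable def theta (p k n : ℕ) : Polynomial (ZMod p) →+* Rn p k n :=
  (Ideal.Quotient.mk _).comp (Polynomial.mapRingHom (algebraMap (ZMod p) (Rbase p k)))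

/-- The set of `f ∈ F_p[x]` representing elements of
`C_i = Tor Res … Res (C) = {f : u^{i-1}·f ∈ C mod ⟨u^i, v⟩}`. -/
def resTorSet (p k n : ℕ) (C : Ideal (Rn p k n)) (i : ℕ) : Set (Polynomial (ZMod p)) :=
  {f | uR p k n ^ (i - 1) * theta p k n f ∈
        C ⊔ Ideal.span {uR p k n ^ i, vR p k n}}

/-- The set of `f ∈ F_p[x]` representing elements of
`C_{k+i} = Tor Res … Res Tor (C) = {f : u^{i-1}·v·f ∈ C mod ⟨u^i v⟩}`. -/
def torTorSet (p k n : ℕ) (C : Ideal (Rn p k n)) (i : ℕ) : Set (Polynomial (ZMod p)) :=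
  {f | uR p k n ^ (i - 1) * vR p k n * theta p k n f ∈
        C ⊔ Ideal.span {uR p k n ^ i * vR p k n}}

/-- `g` is the (monic, minimal-degree) generator of the ideal of `F_p[x]/⟨xⁿ−1⟩` whose set
of polynomial representatives is `S`. -/
def IsMinGen (p n : ℕ) (S : Set (Polynomial (ZMod p))) (g : Polynomial (ZMod p)) : Prop :=
  g.Monic ∧
  S = {f | ∃ a b : Polynomial (ZMod p), f = g * a + (Polynomial.X ^ n - 1) * b} ∧
  ∀ f ∈ S, f ≠ 0 → g.degree ≤ f.degree

/-- The canonical generator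
`A_i = u^{i-1}g_i + u^i g_{ii} + ⋯ + u^{k-1}g_{i(k-1)} + v(g_{ik} + ⋯ + u^{k-1}g_{i(2k-1)})`
as a polynomial over `F_p[u,v]/⟨u^k,v²⟩`, for `1 ≤ i ≤ k`. -/
noncomputable def Apoly (p k : ℕ) (g : ℕ → Polynomial (ZMod p))
    (gg : ℕ → ℕ → Polynomial (ZMod p)) (i : ℕ) : Polynomial (Rbase p k) :=
  Polynomial.C (uu p k ^ (i - 1)) * (g i).map (algebraMap (ZMod p) (Rbase p k))
    + ∑ j ∈ Finset.Icc i (k - 1),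
        Polynomial.C (uu p k ^ j) * (gg i j).map (algebraMap (ZMod p) (Rbase p k))
    + Polynomial.C (vv p k) *
        ∑ j ∈ Finset.Icc k (2 * k - 1),
          Polynomial.C (uu p k ^ (j - k)) * (gg i j).map (algebraMap (ZMod p) (Rbase p k))

/-- The canonical generator
`A_{k+i} = v(u^{i-1}g_{k+i} + u^i g_{(k+i)(k+i)} + ⋯ + u^{k-1}g_{(k+i)(2k-1)})`
as a polynomial over `F_p[u,v]/⟨u^k,v²⟩`, for `1 ≤ i ≤ k`. -/
noncomputable def AVpoly (p k : ℕ) (g : ℕ → Polynomial (ZMod p))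
    (gg : ℕ → ℕ → Polynomial (ZMod p)) (i : ℕ) : Polynomial (Rbase p k) :=
  Polynomial.C (vv p k) *
    (Polynomial.C (uu p k ^ (i - 1)) * (g (k + i)).map (algebraMap (ZMod p) (Rbase p k))
      + ∑ j ∈ Finset.Icc (k + i) (2 * k - 1),
          Polynomial.C (uu p k ^ (j - k)) * (gg (k + i) j).map (algebraMap (ZMod p) (Rbase p k)))

/-- `A_i` as an element of `R_n`. -/
noncomputable def Aelt (p k n : ℕ) (g : ℕ → Polynomial (ZMod p))
    (gg : ℕ → ℕ → Polynomial (ZMod p)) (i : ℕ) : Rn p k n :=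
  Ideal.Quotient.mk _ (Apoly p k g gg i)

/-- `A_{k+i}` as an element of `R_n`. -/
noncomputable def AVelt (p k n : ℕ) (g : ℕ → Polynomial (ZMod p))
    (gg : ℕ → ℕ → Polynomial (ZMod p)) (i : ℕ) : Rn p k n :=
  Ideal.Quotient.mk _ (AVpoly p k g gg i)

/-- The minimum Hamming weight of a nonzero codeword of `C ⊆ R_n` (weights are computed
on the unique representative of degree `< n`). -/
noncomputable def dHam (p k n : ℕ) (C : Ideal (Rn p k n)) : ℕ :=
  sInf {m | ∃ f : Polynomial (Rbase p k), f ≠ 0 ∧ f.degree < (n : ℕ) ∧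
    Ideal.Quotient.mk (Ideal.span {(Polynomial.X : Polynomial (Rbase p k)) ^ n - 1}) f ∈ C ∧
    m = f.support.card}

/-- The minimum Hamming weight of a nonzero codeword of a cyclic code over `F_p` given by a
set `S` of polynomial representatives (closed under adding multiples of `xⁿ−1`). -/
noncomputable def dHamF (p n : ℕ) (S : Set (Polynomial (ZMod p))) : ℕ :=
  sInf {m | ∃ f : Polynomial (ZMod p), f ≠ 0 ∧ f.degree < (n : ℕ) ∧ f ∈ S ∧
    m = f.support.card}

/-!
The element `w = u^(k-1) v` lies in every nonzero ideal of `R = F_p[u,v]/(u^k, v^2)`: under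
`R ≅ (F_p[u]/(u^k))[ε]` this reduces to `F_p[u]/(u^k)`, where every nonzero element is a power
`u^m` (`m < k`) times a unit, hence divides `u^(k-1)`. So a weight-one codeword `c x^j ∈ C` yields
`w x^j ∈ C`, i.e. `x^j ∈ C_{2k} ⊆ ((x - 1)^t)`, which is absurd at `x = 1`. Conversely, by
Frobenius `x^(p^(l-1)) - 1 = (x - 1)^(p^(l-1))` lies in `C_{2k}` once `t ≤ p^(l-1)`, so
`w (x^(p^(l-1)) - 1)` is a codeword of weight two.
-/

theorem Polynomial.card_support_C_mul_X_pow_sub_one {R : Type*} [Ring R] {w : R} (hw : w ≠ 0)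
    {N : ℕ} (hN : 0 < N) : (C w * (X ^ N - 1)).support.card = 2 := by
  rw [show C w * (X ^ N - 1) = C w * X ^ N + C (-w) * X ^ 0 by
    rw [pow_zero, mul_one, C_neg, ← sub_eq_add_neg, mul_sub, mul_one]]
  exact card_support_binomial hN.ne' hw (neg_ne_zero.mpr hw)

namespace AdjoinRoot

variable {K : Type*} {k : ℕ}

theorem root_X_pow_pow_self [CommRing K] : root (X ^ k : K[X]) ^ k = 0 := by
  rw [← mk_X, ← map_pow, mk_self]

variable [Field K]

theorem isUnit_mk_X_pow_of_coeff_zero_ne_zero {q : K[X]} (hq : q.coeff 0 ≠ 0) :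
    IsUnit (mk (X ^ k) q) := by
  obtain ⟨h, hh⟩ := X_dvd_sub_C (p := q)
  rw [sub_eq_iff_eq_add'.mp hh, map_add, map_mul, mk_X]
  have hnil : IsNilpotent (root (X ^ k : K[X]) * mk (X ^ k) h) :=
    (Commute.all _ _).isNilpotent_mul_right ⟨k, root_X_pow_pow_self⟩
  exact hnil.isUnit_add_left_of_commute ((isUnit_C.mpr hq.isUnit).map _) (Commute.all _ _)

theorem root_X_pow_pow_pred_ne_zero (hk : 0 < k) :
    root (X ^ k : K[X]) ^ (k - 1) ≠ 0 := by
  rw [← mk_X, ← map_pow, Ne, mk_eq_zero, pow_dvd_pow_iff X_ne_zero not_isUnit_X]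
  omega

theorem dvd_root_X_pow_pow_pred {b : AdjoinRoot (X ^ k : K[X])} (hb : b ≠ 0) :
    b ∣ root (X ^ k) ^ (k - 1) := by
  obtain ⟨Q, rfl⟩ := mk_surjective b
  have hQ : ¬ X ^ k ∣ Q := by rwa [Ne, mk_eq_zero] at hb
  obtain ⟨q, hQq, hq⟩ :=
    exists_eq_pow_rootMultiplicity_mul_and_not_dvd Q (by rintro rfl; simp at hQ) 0
  rw [C_0, sub_zero] at hQq hq
  have hm : Q.rootMultiplicity 0 < k := by
    by_contra! h
    exact hQ (hQq ▸ (pow_dvd_pow X h).mul_right q)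
  rw [hQq, map_mul, (isUnit_mk_X_pow_of_coeff_zero_ne_zero (X_dvd_iff.not.mp hq)).mul_right_dvd,
    map_pow, mk_X]
  exact pow_dvd_pow _ (by omega)

end AdjoinRoot

open TrivSqZeroExt in
theorem DualNumber.dvd_inl_mul_eps {A : Type*} [CommRing A] {w : A} (hw : ∀ b : A, b ≠ 0 → b ∣ w)
    {z : DualNumber A} (hz : z ≠ 0) : z ∣ inl w * DualNumber.eps := by
  by_cases h : z.fst = 0
  · have hsnd : z.snd ≠ 0 := fun h' => hz (TrivSqZeroExt.ext h h')
    obtain ⟨a, rfl⟩ := hw _ hsnd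
    refine ⟨inl a, TrivSqZeroExt.ext ?_ ?_⟩ <;> simp [h, mul_comm]
  · obtain ⟨a, rfl⟩ := hw _ h
    refine ⟨inl a * DualNumber.eps, TrivSqZeroExt.ext ?_ ?_⟩ <;> simp [mul_comm]

section Rbase

variable (p k : ℕ)

theorem uu_pow_self : uu p k ^ k = 0 := by
  rw [uu, ← map_pow, Ideal.Quotient.eq_zero_iff_mem]
  exact Ideal.subset_span (Or.inl rfl)

theorem vv_mul_self : vv p k * vv p k = 0 := by
  rw [vv, ← map_mul, ← sq, Ideal.Quotient.eq_zero_iff_mem]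
  exact Ideal.subset_span (Or.inr rfl)

noncomputable def dualNumberToRbase :
    DualNumber (AdjoinRoot (X ^ k : (ZMod p)[X])) →ₐ[ZMod p] Rbase p k :=
  DualNumber.lift ⟨(AdjoinRoot.liftAlgHom _ (Algebra.ofId _ _) (uu p k) (by simp [uu_pow_self]),
    vv p k), vv_mul_self p k, fun _ => Commute.all _ _⟩

noncomputable def rbaseToDualNumber :
    Rbase p k →ₐ[ZMod p] DualNumber (AdjoinRoot (X ^ k : (ZMod p)[X])) :=
  Ideal.Quotient.liftₐ _ (MvPolynomial.aeval ![TrivSqZeroExt.inl (AdjoinRoot.root _),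
    DualNumber.eps]) fun a ha => RingHom.mem_ker.mp <| Ideal.span_le.mpr (by
    rintro x (rfl | rfl)
    · simp only [SetLike.mem_coe, RingHom.mem_ker, map_pow, MvPolynomial.aeval_X]
      rw [Matrix.cons_val_zero, TrivSqZeroExt.inl_pow, AdjoinRoot.root_X_pow_pow_self,
        TrivSqZeroExt.inl_zero]
    · simp [sq]) ha

theorem rbaseToDualNumber_uu :
    rbaseToDualNumber p k (uu p k) = TrivSqZeroExt.inl (AdjoinRoot.root _) :=
  MvPolynomial.aeval_X _ 0

theorem rbaseToDualNumber_vv : rbaseToDualNumber p k (vv p k) = DualNumber.eps :=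
  MvPolynomial.aeval_X _ 1

theorem dualNumberToRbase_rbaseToDualNumber (x : Rbase p k) :
    dualNumberToRbase p k (rbaseToDualNumber p k x) = x := by
  suffices (dualNumberToRbase p k).comp (rbaseToDualNumber p k) = AlgHom.id _ _ from
    DFunLike.congr_fun this x
  refine Ideal.Quotient.algHom_ext _ (MvPolynomial.algHom_ext fun i => ?_)
  fin_cases i
  · show dualNumberToRbase p k (rbaseToDualNumber p k (uu p k)) = uu p k
    simp [rbaseToDualNumber_uu, dualNumberToRbase]
  · show dualNumberToRbase p k (rbaseToDualNumber p k (vv p k)) = vv p k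
    simp [rbaseToDualNumber_vv, dualNumberToRbase]

theorem rbaseToDualNumber_uu_pow_pred_mul_vv :
    rbaseToDualNumber p k (uu p k ^ (k - 1) * vv p k)
      = TrivSqZeroExt.inl (AdjoinRoot.root _ ^ (k - 1)) * DualNumber.eps := by
  rw [map_mul, map_pow, rbaseToDualNumber_uu, rbaseToDualNumber_vv, TrivSqZeroExt.inl_pow]

theorem uu_pow_pred_mul_vv_ne_zero [Fact p.Prime] (hk : 0 < k) :
    uu p k ^ (k - 1) * vv p k ≠ 0 := fun h =>
  AdjoinRoot.root_X_pow_pow_pred_ne_zero hk <| by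
    simpa [rbaseToDualNumber_uu_pow_pred_mul_vv] using
      congrArg (fun x => (rbaseToDualNumber p k x).snd) h

theorem dvd_uu_pow_pred_mul_vv [Fact p.Prime] {c : Rbase p k} (hc : c ≠ 0) :
    c ∣ uu p k ^ (k - 1) * vv p k := by
  have hinj := Function.LeftInverse.injective (dualNumberToRbase_rbaseToDualNumber p k)
  have := DualNumber.dvd_inl_mul_eps (fun _ => AdjoinRoot.dvd_root_X_pow_pow_pred)
    (hinj.ne_iff' (map_zero _) |>.mpr hc)
  rw [← rbaseToDualNumber_uu_pow_pred_mul_vv] at this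
  simpa only [dualNumberToRbase_rbaseToDualNumber] using map_dvd (dualNumberToRbase p k) this

end Rbase

section Code

variable {p k n : ℕ}

theorem uR_pow_pred_mul_vR_mul_theta (f : (ZMod p)[X]) :
    uR p k n ^ (k - 1) * vR p k n * theta p k n f = Ideal.Quotient.mk _
      (C (uu p k ^ (k - 1) * vv p k) * f.map (algebraMap (ZMod p) (Rbase p k))) := by
  rw [uR, vR, theta, RingHom.comp_apply, coe_mapRingHom, ← map_pow, ← map_mul, ← map_mul, C_mul,
    C_pow]

theorem mem_torTorSet_self_iff {C : Ideal (Rn p k n)} {f : (ZMod p)[X]} :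
    f ∈ torTorSet p k n C k ↔ uR p k n ^ (k - 1) * vR p k n * theta p k n f ∈ C := by
  rw [torTorSet, Set.mem_ofPred_eq, uR, ← map_pow, ← C_pow, uu_pow_self, C_0, map_zero, zero_mul,
    Ideal.span_singleton_eq_bot.mpr rfl, sup_bot_eq]

theorem mk_C_mul_X_pow_notMem [Fact p.Prime] {C : Ideal (Rn p k n)}
    (hvanish : ∀ f ∈ torTorSet p k n C k, f.eval 1 = 0) {c : Rbase p k} (hc : c ≠ 0) (j : ℕ) :
    Ideal.Quotient.mk _ (Polynomial.C c * X ^ j) ∉ C := by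
  intro h
  obtain ⟨r, hr⟩ := dvd_uu_pow_pred_mul_vv p k hc
  have hXj : X ^ j ∈ torTorSet p k n C k := by
    rw [mem_torTorSet_self_iff, uR_pow_pred_mul_vR_mul_theta, hr]
    convert C.mul_mem_left (Ideal.Quotient.mk _ (Polynomial.C r)) h using 1
    rw [← map_mul]
    congr 1
    simp only [Polynomial.map_pow, map_X, C_mul]
    ring
  simpa using hvanish _ hXj

theorem dHam_eq_two {C : Ideal (Rn p k n)} {f : (Rbase p k)[X]} (hfn : f.degree < n)
    (hfC : Ideal.Quotient.mk _ f ∈ C) (hf : f.support.card = 2)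
    (hmono : ∀ c : Rbase p k, c ≠ 0 → ∀ j, Ideal.Quotient.mk _ (Polynomial.C c * X ^ j) ∉ C) :
    dHam p k n C = 2 := by
  have hf0 : f ≠ 0 := by rintro rfl; simp at hf
  refine le_antisymm (Nat.sInf_le ⟨f, hf0, hfn, hfC, hf.symm⟩)
    (le_csInf ⟨2, f, hf0, hfn, hfC, hf.symm⟩ ?_)
  rintro _ ⟨g, hg0, -, hgC, rfl⟩
  by_contra! hlt
  interval_cases h : g.support.card
  · exact hg0 (support_eq_empty.mp (Finset.card_eq_zero.mp h))
  · obtain ⟨j, c, hc, rfl⟩ := card_support_eq_one.mp h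
    exact hmono c hc j hgC

end Code

/-- a cyclic code `C` of length `p^l` over `F_p[u,v]/⟨u^k,v²,uv−vu⟩` whose
torsion code `C_{2k}` is generated by `(x−1)^{t}` with `0 < t ≤ p^{l−1}` has minimum
Hamming distance `2`. -/
theorem stmt14 (p k l t : ℕ) [Fact p.Prime] (hk : 0 < k) (hl : 0 < l)
    (C : Ideal (Rn p k (p ^ l)))
    (hgen : IsMinGen p (p ^ l) (torTorSet p k (p ^ l) C k)
      ((Polynomial.X - 1 : Polynomial (ZMod p)) ^ t))
    (ht0 : 0 < t) (ht : t ≤ p ^ (l - 1)) :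
    dHam p k (p ^ l) C = 2 := by
  have hp := (Fact.out : p.Prime)
  have hvanish : ∀ f ∈ torTorSet p k (p ^ l) C k, f.eval 1 = 0 := by
    rw [hgen.2.1]
    rintro f ⟨a, b, rfl⟩
    simp [ht0.ne']
  have hfrob : X ^ p ^ (l - 1) - 1 ∈ torTorSet p k (p ^ l) C k := by
    rw [hgen.2.1]
    refine ⟨(X - 1) ^ (p ^ (l - 1) - t), 0, ?_⟩
    rw [mul_zero, add_zero, ← pow_add, Nat.add_sub_cancel' ht, sub_pow_char_pow, one_pow]
  rw [mem_torTorSet_self_iff, uR_pow_pred_mul_vR_mul_theta] at hfrob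
  refine dHam_eq_two ?_ (by simpa using hfrob)
    (card_support_C_mul_X_pow_sub_one (uu_pow_pred_mul_vv_ne_zero p k hk) (Nat.pow_pos hp.pos))
    fun c hc j => mk_C_mul_X_pow_notMem hvanish hc j
  calc _ ≤ ((p ^ (l - 1) : ℕ) : WithBot ℕ) := by compute_degree!
    _ < (p ^ l : ℕ) := by exact_mod_cast Nat.pow_lt_pow_right hp.one_lt (by omega)
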